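/- Conversely, if there exists a complex matrix S commuting with every element of a set 𝒢 of traceless skew-Hermitian n×n matrices such that S is not a scalar multiple of the identity, then the real Lie algebra generated by 𝒢 is a proper subalgebra of su(n) (it does not equal su(n)). -/

import Mathlib

open Matrix

attribute [local instance 100] LieRing.ofAssociativeRing

lemma stdBasisMatrix_conjT {n : ℕ} (i j : Fin n) :
    (Matrix.single i j (1 : ℂ))ᴴ = Matrix.single j i (1 : ℂ) := by
  ext a b
  simp [Matrix.conjTranspose_apply, Matrix.single, and_comm, apply_ite (star : ℂ → ℂ)]

/-- If some matrix `S` commuting with every element of a set `𝒢` of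
traceless skew-Hermitian matrices is not a scalar multiple of the identity, then
the real Lie algebra generated by `𝒢` does not equal `su(n)` (it fails to contain
some traceless skew-Hermitian matrix). -/
theorem stmt7 {n : ℕ} (hn : 2 ≤ n) (𝒢 : Set (Matrix (Fin n) (Fin n) ℂ))
    (h𝒢 : ∀ H ∈ 𝒢, Hᴴ = -H ∧ H.trace = 0)
    (S : Matrix (Fin n) (Fin n) ℂ) (hS : ∀ H ∈ 𝒢, H * S - S * H = 0)
    (hns : ¬∃ c : ℂ, S = c • (1 : Matrix (Fin n) (Fin n) ℂ)) :
    ¬(∀ A : Matrix (Fin n) (Fin n) ℂ, (Aᴴ = -A ∧ A.trace = 0) →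
        A ∈ LieSubalgebra.lieSpan ℝ (Matrix (Fin n) (Fin n) ℂ) 𝒢) := by
  haveI : NeZero n := ⟨by omega⟩
  intro hall
  -- centralizer of S as a Lie subalgebra
  let C : LieSubalgebra ℝ (Matrix (Fin n) (Fin n) ℂ) :=
    { carrier := {A | A * S = S * A}
      add_mem' := by
        intro a b ha hb
        simp only [Set.mem_setOf_eq] at *
        rw [add_mul, mul_add, ha, hb]
      smul_mem' := by
        intro c a ha
        simp only [Set.mem_setOf_eq] at *
        rw [smul_mul_assoc, mul_smul_comm, ha]
      zero_mem' := by simp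
      lie_mem' := by
        intro a b ha hb
        have ha' : a * S = S * a := ha
        have hb' : b * S = S * b := hb
        show ⁅a, b⁆ * S = S * ⁅a, b⁆
        rw [Ring.lie_def, sub_mul, mul_sub, mul_assoc a b S, hb', ← mul_assoc a S b, ha',
          mul_assoc S a b, mul_assoc b a S, ha', ← mul_assoc b S a, hb', mul_assoc S b a,
          ← mul_sub]
      }
  have hspan : LieSubalgebra.lieSpan ℝ (Matrix (Fin n) (Fin n) ℂ) 𝒢 ≤ C := by
    rw [LieSubalgebra.lieSpan_le]
    intro H hH
    have := hS H hH
    exact sub_eq_zero.mp this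
  have hcomm : ∀ A : Matrix (Fin n) (Fin n) ℂ, (Aᴴ = -A ∧ A.trace = 0) → A * S = S * A :=
    fun A hA => hspan (hall A hA)
  -- each std basis matrix with j ≠ k commutes with S
  have hstd : ∀ j k : Fin n, j ≠ k → Matrix.single j k (1 : ℂ) * S
      = S * Matrix.single j k (1 : ℂ) := by
    intro j k hjk
    set E := Matrix.single j k (1 : ℂ) with hE
    set F := Matrix.single k j (1 : ℂ) with hF
    have h1 : (E - F) * S = S * (E - F) := by
      apply hcomm
      constructor
      · rw [conjTranspose_sub, stdBasisMatrix_conjT, stdBasisMatrix_conjT, neg_sub]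
      · rw [trace_sub, Matrix.trace_single_eq_of_ne j k 1 hjk,
          Matrix.trace_single_eq_of_ne k j 1 (Ne.symm hjk), sub_zero]
    have h2 : (Complex.I • (E + F)) * S = S * (Complex.I • (E + F)) := by
      apply hcomm
      constructor
      · rw [conjTranspose_smul, conjTranspose_add, stdBasisMatrix_conjT, stdBasisMatrix_conjT]
        simp only [Complex.star_def, Complex.conj_I, neg_smul, smul_add, neg_add_rev]
        rfl
      · rw [trace_smul, trace_add, Matrix.trace_single_eq_of_ne j k 1 hjk,
          Matrix.trace_single_eq_of_ne k j 1 (Ne.symm hjk), add_zero, smul_zero]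
    have h3 : ((-Complex.I) • (Complex.I • (E + F))) * S
        = S * ((-Complex.I) • (Complex.I • (E + F))) := by
      rw [smul_mul_assoc, mul_smul_comm, h2]
    have h4 : (-Complex.I) • (Complex.I • (E + F)) = E + F := by
      rw [smul_smul, neg_mul, Complex.I_mul_I, neg_neg, one_smul]
    rw [h4] at h3
    have h5 : ((2 : ℂ) • E) * S = S * ((2 : ℂ) • E) := by
      have : (2 : ℂ) • E = (E - F) + (E + F) := by ring_nf; module
      rw [this, add_mul, mul_add, h1, h3]
    have := congrArg (fun M => ((2 : ℂ)⁻¹) • M) h5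
    simpa [smul_mul_assoc, mul_smul_comm, smul_smul] using this
  -- off-diagonal entries of S vanish
  have hoff : ∀ k b : Fin n, k ≠ b → S k b = 0 := by
    intro k b hkb
    have h := hstd b k (Ne.symm hkb)
    have := congrFun (congrFun h b) b
    simpa [Ne.symm hkb] using this
  -- diagonal entries are equal
  have hdiag : ∀ j k : Fin n, S k k = S j j := by
    intro j k
    rcases eq_or_ne j k with rfl | hjk
    · rfl
    have h := hstd j k hjk
    have := congrFun (congrFun h j) k
    simpa [Matrix.single_mul_apply_same,
      Matrix.mul_single_apply_same] using this
  apply hns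
  refine ⟨S 0 0, ?_⟩
  ext a b
  rcases eq_or_ne a b with rfl | hab
  · simp [Matrix.one_apply, hdiag (0 : Fin n) a]
  · simp [Matrix.one_apply, hab, hoff a b hab]
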